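/- arXiv:2002.10769 — 4 statements merged into one kernel-verified Lean document; each statement's English description precedes it below -/
import Mathlib

section
/- Let s, σ, l > 0 with sl > 4 and 1 + σ - sl/2 > 0, and α_i = s/(i+σ). Then A_k := ∏_{i=1}^k (1 - α_i l/2) satisfies A_k = (Γ(1+σ)/Γ(1+σ-sl/2)) (k+1+σ)^{-sl/2} + O((k+1+σ)^{-1-sl/2}) as k → ∞; in particular A_k = O(k^{-sl/2}). -/
/-!
Put `c = s l / 2`, `y_k = k + 1 + σ` and `B_k = A_k y_k ^ c`. Then
`log B_{k+1} - log B_k = log (1 - c / y_k) + c log (1 + 1 / y_k)` (`logDefect c y_k` below),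
which is `O(1 / y_k²)` by the Taylor bound for `log (1 - u)`. Hence `log B_k` converges with a
tail of order `1 / k`, so `B_k = C + O(1 / y_k)` for some constant `C`. Since `n ^ c A_{n+1}` is
the quotient of Euler's products `GammaSeq (1 + σ) n / GammaSeq (1 + σ - c) n`, the limit is
`C = Γ(1 + σ) / Γ(1 + σ - c)`.
-/

open Finset Filter Asymptotics Real Topology

theorem summable_and_abs_sum_range_sub_tsum_le {f g : ℕ → ℝ} (hg : Tendsto g atTop (𝓝 0))
    (hfg : ∀ j, |f j| ≤ g j - g (j + 1)) :
    Summable f ∧ ∀ k, |∑ j ∈ range k, f j - ∑' j, f j| ≤ g k := by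
  have htel : ∀ k, HasSum (fun j => g (j + k) - g (j + k + 1)) (g k) := by
    intro k
    rw [hasSum_iff_tendsto_nat_of_nonneg fun j => (abs_nonneg _).trans (hfg _)]
    have hlim := (tendsto_const_nhds (x := g k)).sub (hg.comp (tendsto_add_atTop_nat k))
    rw [sub_zero] at hlim
    refine hlim.congr fun n => ?_
    have h := sum_range_sub' (fun j => g (j + k)) n
    simp only [zero_add, add_right_comm _ 1 k] at h
    exact h.symm
  have hf : Summable f := .of_norm_bounded (htel 0).summable (by simpa using hfg)
  refine ⟨hf, fun k => ?_⟩
  have habs : Summable fun j => |f (j + k)| := (summable_nat_add_iff k).2 hf.abs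
  have htsum : |∑' j, f (j + k)| ≤ ∑' j, |f (j + k)| := by
    simpa only [Real.norm_eq_abs] using norm_tsum_le_tsum_norm (f := fun j => f (j + k)) habs
  rw [← hf.sum_add_tsum_nat_add k, sub_add_cancel_left, abs_neg]
  exact htsum.trans (hasSum_le (fun j => hfg _) habs.hasSum (htel k))

theorem abs_log_one_sub_add_le {u θ : ℝ} (hu : |u| ≤ θ) (hθ : θ < 1) :
    |log (1 - u) + u| ≤ u ^ 2 / (1 - θ) := by
  have h := abs_log_sub_add_sum_range_le (hu.trans_lt hθ) 1
  simp only [sum_range_one, zero_add, pow_one, Nat.cast_zero, div_one, Nat.reduceAdd, sq_abs] at h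
  rw [add_comm]
  exact h.trans (div_le_div_of_nonneg_left (sq_nonneg u) (by linarith) (by linarith))

noncomputable def logDefect (c x : ℝ) : ℝ := log (1 - c / x) + c * (log (x + 1) - log x)

theorem exp_logDefect {c x : ℝ} (hx : 0 < x) (hcx : c < x) :
    exp (logDefect c x) = (1 - c / x) * ((x + 1) ^ c / x ^ c) := by
  have h1 : 0 < 1 - c / x := by rw [sub_pos, div_lt_one hx]; exact hcx
  rw [logDefect, exp_add, exp_log h1, mul_sub, exp_sub, rpow_def_of_pos (by linarith),
    rpow_def_of_pos hx, mul_comm c, mul_comm c]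

theorem abs_logDefect_le {c x θ : ℝ} (hc : 0 ≤ c) (hx : 1 < x) (hcx : c / x ≤ θ) (hθ : θ < 1) :
    |logDefect c x| ≤ (c ^ 2 / (1 - θ) + c) * (1 / (x - 1) - 1 / x) := by
  have hx0 : 0 < x := by linarith
  have hsq : (1 / x) ^ 2 ≤ 1 / (x - 1) - 1 / x := by
    rw [div_sub_div _ _ (by linarith) hx0.ne', div_pow, one_pow, sq]
    exact div_le_div₀ (by linarith) (by linarith) (by nlinarith) (by nlinarith)
  have hsplit : logDefect c x
      = (log (1 - c / x) + c / x) + c * (log (1 - -(1 / x)) + -(1 / x)) := by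
    rw [logDefect, ← log_div (by linarith) hx0.ne', sub_neg_eq_add, add_div, div_self hx0.ne',
      add_comm (1 : ℝ)]
    ring
  have hfirst : |log (1 - c / x) + c / x| ≤ c ^ 2 / (1 - θ) * (1 / (x - 1) - 1 / x) := by
    refine (abs_log_one_sub_add_le (by rwa [abs_of_nonneg (by positivity)]) hθ).trans ?_
    rw [show (c / x) ^ 2 / (1 - θ) = c ^ 2 / (1 - θ) * (1 / x) ^ 2 by ring]
    exact mul_le_mul_of_nonneg_left hsq (div_nonneg (sq_nonneg c) (by linarith))
  have hsecond : |log (1 - -(1 / x)) + -(1 / x)| ≤ 1 / (x - 1) - 1 / x := by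
    refine (abs_log_one_sub_add_le (abs_neg _).le ?_).trans_eq ?_
    · rw [abs_of_pos (by positivity), div_lt_one hx0]; exact hx
    · rw [abs_of_pos (by positivity)]
      field_simp [(by linarith : x - 1 ≠ 0)]
      ring
  calc |logDefect c x| ≤ |log (1 - c / x) + c / x| + c * |log (1 - -(1 / x)) + -(1 / x)| := by
        rw [hsplit]
        exact (abs_add_le _ _).trans_eq (by rw [abs_mul, abs_of_nonneg hc])
    _ ≤ _ := by nlinarith

theorem isBigO_inv_natCast_add_one_add {a : ℝ} (ha : 0 < a) :
    (fun k : ℕ => ((k : ℝ) + a)⁻¹) =O[atTop] fun k : ℕ => ((k : ℝ) + 1 + a)⁻¹ := by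
  refine IsBigO.of_bound (1 + 1 / a) (Eventually.of_forall fun k => ?_)
  have hk := k.cast_nonneg (α := ℝ)
  rw [norm_inv, norm_inv, norm_of_nonneg (by linarith), norm_of_nonneg (by linarith),
    ← div_eq_mul_inv, inv_eq_one_div, div_le_div_iff₀ (by linarith) (by linarith)]
  have : 0 ≤ k / a := by positivity
  field_simp
  nlinarith

theorem isBigO_rpow_neg_natCast_add {a c : ℝ} (ha : 0 ≤ a) (hc : 0 ≤ c) :
    (fun k : ℕ => ((k : ℝ) + a) ^ (-c)) =O[atTop] fun k : ℕ => (k : ℝ) ^ (-c) := by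
  refine IsBigO.of_bound 1 ((eventually_gt_atTop 0).mono fun k hk => ?_)
  have hk0 : (0 : ℝ) < k := Nat.cast_pos.2 hk
  rw [one_mul, norm_of_nonneg (by positivity), norm_of_nonneg (by positivity)]
  exact rpow_le_rpow_of_nonpos hk0 (by linarith) (by linarith)

noncomputable def stepProd (σ c : ℝ) (k : ℕ) : ℝ := ∏ i ∈ Icc 1 k, (1 - c / ((i : ℝ) + σ))

namespace stepProd

variable {σ c : ℝ}

@[simp]
theorem zero : stepProd σ c 0 = 1 := by simp [stepProd]

theorem succ (k : ℕ) : stepProd σ c (k + 1) = stepProd σ c k * (1 - c / ((k : ℝ) + 1 + σ)) := by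
  rw [stepProd, prod_Icc_succ_top (by omega), Nat.cast_succ]
  rfl

theorem mul_rpow_eq_exp (hc : 0 ≤ c) (hcσ : c < 1 + σ) (k : ℕ) :
    stepProd σ c k * ((k : ℝ) + 1 + σ) ^ c
      = (1 + σ) ^ c * exp (∑ j ∈ range k, logDefect c ((j : ℝ) + 1 + σ)) := by
  induction k with
  | zero => simp
  | succ k ih =>
    have hx : c < (k : ℝ) + 1 + σ := by have := k.cast_nonneg (α := ℝ); linarith
    have hx0 : 0 < (k : ℝ) + 1 + σ := by linarith
    rw [sum_range_succ, exp_add, ← mul_assoc, ← ih, exp_logDefect hx0 hx, succ, Nat.cast_succ,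
      show (k : ℝ) + 1 + 1 + σ = (k + 1 + σ) + 1 by ring]
    field_simp [(rpow_pos_of_pos hx0 c).ne']

theorem eq_prod_range (k : ℕ) : stepProd σ c k = ∏ j ∈ range k, (1 - c / ((j : ℝ) + 1 + σ)) := by
  induction k with
  | zero => simp
  | succ k ih => rw [succ, ih, prod_range_succ]

theorem GammaSeq_div_GammaSeq (hc : 0 ≤ c) (hcσ : c < 1 + σ) {n : ℕ} (hn : n ≠ 0) :
    GammaSeq (1 + σ) n / GammaSeq (1 + σ - c) n = (n : ℝ) ^ c * stepProd σ c (n + 1) := by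
  have hn0 : (0 : ℝ) < n := by positivity
  have hprod : ∏ j ∈ range (n + 1), (1 + σ - c + (j : ℝ))
      = stepProd σ c (n + 1) * ∏ j ∈ range (n + 1), (1 + σ + (j : ℝ)) := by
    rw [eq_prod_range, ← prod_mul_distrib]
    refine prod_congr rfl fun j _ => ?_
    have : (0 : ℝ) < j + 1 + σ := by have := j.cast_nonneg (α := ℝ); linarith
    field_simp
    ring
  have hP : ∏ j ∈ range (n + 1), (1 + σ + (j : ℝ)) ≠ 0 :=
    prod_ne_zero_iff.2 fun j _ => by have := j.cast_nonneg (α := ℝ); linarith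
  have hA : stepProd σ c (n + 1) ≠ 0 := by
    rw [eq_prod_range]
    refine prod_ne_zero_iff.2 fun j _ => ?_
    have : (0 : ℝ) < j + 1 + σ := by have := j.cast_nonneg (α := ℝ); linarith
    exact (sub_pos.2 ((div_lt_one this).2 (by linarith))).ne'
  have hpow : (n : ℝ) ^ (1 + σ) = n ^ c * n ^ (1 + σ - c) := by rw [← rpow_add hn0]; ring_nf
  rw [GammaSeq, GammaSeq, hprod, hpow]
  field_simp [(rpow_pos_of_pos hn0 (1 + σ - c)).ne']

theorem tendsto_mul_rpow (hc : 0 ≤ c) (hcσ : c < 1 + σ) :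
    Tendsto (fun k : ℕ => stepProd σ c k * ((k : ℝ) + 1 + σ) ^ c) atTop
      (𝓝 (Gamma (1 + σ) / Gamma (1 + σ - c))) := by
  have hGamma : Tendsto (fun n : ℕ => (n : ℝ) ^ c * stepProd σ c (n + 1)) atTop
      (𝓝 (Gamma (1 + σ) / Gamma (1 + σ - c))) :=
    ((GammaSeq_tendsto_Gamma _).div (GammaSeq_tendsto_Gamma _)
      (Gamma_pos_of_pos (by linarith)).ne').congr'
      ((eventually_ne_atTop 0).mono fun n hn => GammaSeq_div_GammaSeq hc hcσ hn)
  have hratio : Tendsto (fun n : ℕ => (1 + (2 + σ) / n) ^ c) atTop (𝓝 1) := by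
    simpa using (tendsto_const_nhds.add (tendsto_const_div_atTop_nhds_zero_nat (2 + σ))).rpow_const
      (p := c) (Or.inl (by norm_num : (1 : ℝ) + 0 ≠ 0))
  rw [← tendsto_add_atTop_iff_nat 1]
  have hlim := hGamma.mul hratio
  rw [mul_one] at hlim
  refine hlim.congr' ?_
  filter_upwards [eventually_ne_atTop 0] with n hn
  have hn0 : (0 : ℝ) < n := by positivity
  have hσ2 : 0 < 2 + σ := by linarith
  rw [mul_right_comm, mul_comm, ← mul_rpow hn0.le (by positivity), mul_add, mul_one,
    mul_div_cancel₀ _ hn0.ne', Nat.cast_succ]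
  ring_nf

theorem mul_rpow_sub_isBigO (hσ : 0 < σ) (hc : 0 ≤ c) (hcσ : c < 1 + σ) :
    ∃ C, (fun k : ℕ => stepProd σ c k * ((k : ℝ) + 1 + σ) ^ c - C)
      =O[atTop] fun k : ℕ => ((k : ℝ) + 1 + σ)⁻¹ := by
  set F : ℕ → ℝ := fun j => logDefect c ((j : ℝ) + 1 + σ)
  set K : ℝ := c ^ 2 / (1 - c / (1 + σ)) + c
  have hF : ∀ j : ℕ, |F j| ≤ K / ((j : ℝ) + σ) - K / (((j + 1 : ℕ) : ℝ) + σ) := by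
    intro j
    have hj := j.cast_nonneg (α := ℝ)
    have h := abs_logDefect_le hc (x := (j : ℝ) + 1 + σ) (by linarith)
      (div_le_div_of_nonneg_left hc (by linarith) (by linarith)) ((div_lt_one (by linarith)).2 hcσ)
    rw [mul_sub, mul_one_div, mul_one_div, show (j : ℝ) + 1 + σ - 1 = j + σ by ring] at h
    simpa only [Nat.cast_succ] using h
  obtain ⟨⟨S, hS⟩, htail⟩ := summable_and_abs_sum_range_sub_tsum_le
    (tendsto_const_nhds.div_atTop (tendsto_atTop_add_const_right _ σ tendsto_natCast_atTop_atTop))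
    hF
  rw [hS.tsum_eq] at htail
  set δ : ℕ → ℝ := fun k => ∑ j ∈ range k, F j - S
  have hδ0 : Tendsto δ atTop (𝓝 0) := by
    simpa only [sub_self] using hS.tendsto_sum_nat.sub_const S
  have hδ : δ =O[atTop] fun k : ℕ => ((k : ℝ) + σ)⁻¹ := by
    refine IsBigO.of_bound K (Eventually.of_forall fun k => ?_)
    have hk := k.cast_nonneg (α := ℝ)
    rw [Real.norm_eq_abs, norm_inv, Real.norm_of_nonneg (by linarith), ← div_eq_mul_inv]
    exact htail k
  have hexp : (fun k => exp (δ k) - 1) =O[atTop] δ :=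
    ((hasDerivAt_exp 0).isBigO_sub.comp_tendsto hδ0).congr (fun k => by simp) (fun k => by simp)
  refine ⟨(1 + σ) ^ c * exp S, ?_⟩
  have heq : (fun k : ℕ => stepProd σ c k * ((k : ℝ) + 1 + σ) ^ c - (1 + σ) ^ c * exp S)
      = fun k => (1 + σ) ^ c * exp S * (exp (δ k) - 1) := by
    ext k
    rw [mul_rpow_eq_exp hc hcσ, mul_sub, mul_one, mul_assoc, ← exp_add, add_sub_cancel]
  rw [heq]
  exact (hexp.trans (hδ.trans (isBigO_inv_natCast_add_one_add hσ))).const_mul_left _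

theorem sub_Gamma_div_mul_rpow_isBigO (hσ : 0 < σ) (hc : 0 ≤ c) (hcσ : c < 1 + σ) :
    (fun k : ℕ => stepProd σ c k
        - Gamma (1 + σ) / Gamma (1 + σ - c) * ((k : ℝ) + 1 + σ) ^ (-c))
      =O[atTop] fun k : ℕ => ((k : ℝ) + 1 + σ) ^ (-1 - c) := by
  obtain ⟨C, hC⟩ := mul_rpow_sub_isBigO hσ hc hcσ
  have hy : Tendsto (fun k : ℕ => (k : ℝ) + 1 + σ) atTop atTop :=
    tendsto_atTop_add_const_right _ σ (tendsto_atTop_add_const_right _ 1 tendsto_natCast_atTop_atTop)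
  have hCeq : C = Gamma (1 + σ) / Gamma (1 + σ - c) := by
    refine tendsto_nhds_unique ?_ (tendsto_mul_rpow hc hcσ)
    simpa using (hC.trans_tendsto (tendsto_inv_atTop_zero.comp hy)).add_const C
  subst hCeq
  refine (hC.mul (isBigO_refl (fun k : ℕ => ((k : ℝ) + 1 + σ) ^ (-c)) atTop)).congr
    (fun k => ?_) (fun k => ?_)
  all_goals have hk : (0 : ℝ) < k + 1 + σ := by have := k.cast_nonneg (α := ℝ); linarith
  · rw [sub_mul, mul_assoc, ← rpow_add hk, add_neg_cancel, rpow_zero, mul_one]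
  · rw [← rpow_neg_one, ← rpow_add hk, ← sub_eq_add_neg]

theorem isBigO_rpow_neg (hc : 0 ≤ c) (hcσ : c < 1 + σ) :
    (fun k : ℕ => stepProd σ c k) =O[atTop] fun k : ℕ => (k : ℝ) ^ (-c) := by
  have hB := (tendsto_mul_rpow hc hcσ).isBigO_one ℝ
  have hy := isBigO_rpow_neg_natCast_add (a := 1 + σ) (by linarith) hc
  refine (hB.mul hy).congr (fun k => ?_) (fun k => one_mul _)
  have hk : (0 : ℝ) < k + 1 + σ := by have := k.cast_nonneg (α := ℝ); linarith
  rw [← add_assoc, mul_assoc, ← rpow_add hk, add_neg_cancel, rpow_zero, mul_one]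

end stepProd

theorem prod_one_sub_step_asymptotics_general
    (s σ l : ℝ) (hσ : 0 < σ)
    (hsl : 4 < s * l) (hσ' : 0 < 1 + σ - s * l / 2) :
    ((fun k : ℕ => (∏ i ∈ Finset.Icc 1 k, (1 - (s / ((i : ℝ) + σ)) * l / 2))
          - (Real.Gamma (1 + σ) / Real.Gamma (1 + σ - s * l / 2))
            * ((k : ℝ) + 1 + σ) ^ (-(s * l / 2)))
        =O[atTop] fun k : ℕ => ((k : ℝ) + 1 + σ) ^ (-1 - s * l / 2)) ∧
      ((fun k : ℕ => ∏ i ∈ Finset.Icc 1 k, (1 - (s / ((i : ℝ) + σ)) * l / 2))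
        =O[atTop] fun k : ℕ => (k : ℝ) ^ (-(s * l / 2))) := by
  have hc : 0 ≤ s * l / 2 := by linarith
  have hcσ : s * l / 2 < 1 + σ := by linarith
  have hfactor : ∀ i : ℕ, 1 - s / ((i : ℝ) + σ) * l / 2 = 1 - s * l / 2 / ((i : ℝ) + σ) :=
    fun i => by ring
  simp only [hfactor]
  exact ⟨stepProd.sub_Gamma_div_mul_rpow_isBigO hσ hc hcσ, stepProd.isBigO_rpow_neg hc hcσ⟩

theorem prod_one_sub_step_asymptotics
    (s σ l : ℝ) (hs : 0 < s) (hσ : 0 < σ) (hl : 0 < l)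
    (hsl : 4 < s * l) (hσ' : 0 < 1 + σ - s * l / 2) :
    ((fun k : ℕ => (∏ i ∈ Finset.Icc 1 k, (1 - (s / ((i : ℝ) + σ)) * l / 2))
          - (Real.Gamma (1 + σ) / Real.Gamma (1 + σ - s * l / 2))
            * ((k : ℝ) + 1 + σ) ^ (-(s * l / 2)))
        =O[atTop] fun k : ℕ => ((k : ℝ) + 1 + σ) ^ (-1 - s * l / 2)) ∧
      ((fun k : ℕ => ∏ i ∈ Finset.Icc 1 k, (1 - (s / ((i : ℝ) + σ)) * l / 2))
        =O[atTop] fun k : ℕ => (k : ℝ) ^ (-(s * l / 2))) :=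
  prod_one_sub_step_asymptotics_general s σ l hσ hsl hσ'
end

section
/- Let s, σ, l > 0 with sl > 4, 1+σ-sl/2 > 0, let 0 ≤ a ≤ 1 with sl/2 > 1 + a, and α_i = s/(i+σ). Then B_k(a) := ∑_{i=1}^k α_i^{2+a} ∏_{j=i+1}^k (1 - α_j l/2) = O(k^{-1-a}) as k → ∞. -/
/-!
With `c = s l / 2` and `x = k + 1 + σ`, the sums satisfy the linear recursion
`B (k + 1) = (1 - c / x) * B k + s ^ (2 + a) * x ^ (-(2 + a))`.
Since `c > 1 + a`, the two Bernoulli inequalities `1 - c / x ≤ (1 - 1 / x) ^ c` and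
`(1 - 1 / x) ^ δ ≤ 1 - δ / x` (for `0 ≤ δ ≤ 1`) show that `C * (x - 1) ^ (-(1 + a))` is a
supersolution of this recursion once `C` is large, so by induction
`|B k| ≤ C * (k + σ) ^ (-(1 + a))` for all large `k`.
-/

open Finset Filter Asymptotics

theorem sum_mul_prod_Icc_succ {R : Type*} [CommSemiring R] (β γ : ℕ → R) (k : ℕ) :
    ∑ i ∈ Icc 1 (k + 1), β i * ∏ j ∈ Icc (i + 1) (k + 1), γ j
      = γ (k + 1) * ∑ i ∈ Icc 1 k, β i * ∏ j ∈ Icc (i + 1) k, γ j + β (k + 1) := by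
  rw [sum_Icc_succ_top (by omega), Icc_eq_empty (a := k + 1 + 1) (by omega), prod_empty, mul_one,
    mul_sum]
  congr 1
  refine sum_congr rfl fun i hi => ?_
  rw [prod_Icc_succ_top (by simp at hi; omega)]
  ring

theorem one_sub_div_mul_rpow_add_le {c p δ x : ℝ} (hc : 1 ≤ c) (hδ0 : 0 ≤ δ) (hδ1 : δ ≤ 1)
    (hδp : δ ≤ c - p) (hx : 1 < x) :
    (1 - c / x) * (x - 1) ^ (-p) + δ * x ^ (-(p + 1)) ≤ x ^ (-p) := by
  have hx0 : 0 < x := by linarith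
  set t := 1 - 1 / x with ht
  have ht0 : 0 < t := by rw [ht, sub_pos, div_lt_one hx0]; exact hx
  have ht1 : t ≤ 1 := by rw [ht]; linarith [one_div_pos.2 hx0]
  have hbt : -1 ≤ -(1 / x) := by linarith [(div_le_one hx0).2 hx.le]
  have bernoulli_le : 1 - c / x ≤ t ^ c := by
    have := one_add_mul_self_le_rpow_one_add hbt hc
    rw [← sub_eq_add_neg] at this
    linarith [show c * -(1 / x) = -(c / x) by ring]
  have bernoulli_ge : t ^ δ ≤ 1 - δ / x := by
    have := rpow_one_add_le_one_add_mul_self hbt hδ0 hδ1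
    rw [← sub_eq_add_neg] at this
    linarith [show δ * -(1 / x) = -(δ / x) by ring]
  have hsplit : (x - 1) ^ (-p) = x ^ (-p) * t ^ (-p) := by
    rw [← Real.mul_rpow hx0.le ht0.le, ht]; field_simp
  have hpow : x ^ (-(p + 1)) = x ^ (-p) / x := by
    rw [← Real.rpow_sub_one hx0.ne']; ring_nf
  calc (1 - c / x) * (x - 1) ^ (-p) + δ * x ^ (-(p + 1))
      ≤ x ^ (-p) * (t ^ c * t ^ (-p)) + δ * x ^ (-(p + 1)) := by
        rw [hsplit]
        nlinarith [mul_le_mul_of_nonneg_right bernoulli_le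
          (mul_nonneg (Real.rpow_nonneg hx0.le (-p)) (Real.rpow_nonneg ht0.le (-p)))]
    _ = x ^ (-p) * t ^ (c - p) + δ * x ^ (-(p + 1)) := by
        rw [← Real.rpow_add ht0, sub_eq_add_neg]
    _ ≤ x ^ (-p) * (1 - δ / x) + δ * x ^ (-(p + 1)) := by
        gcongr
        exact (Real.rpow_le_rpow_of_exponent_ge ht0 ht1 hδp).trans bernoulli_ge
    _ = x ^ (-p) := by rw [hpow]; ring

theorem le_of_le_mul_add_of_mul_add_le {u v ρ g : ℕ → ℝ} {k₀ : ℕ}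
    (hρ : ∀ k ≥ k₀, 0 ≤ ρ k) (hu : ∀ k ≥ k₀, u (k + 1) ≤ ρ k * u k + g k)
    (hv : ∀ k ≥ k₀, ρ k * v k + g k ≤ v (k + 1)) (h₀ : u k₀ ≤ v k₀) :
    ∀ k ≥ k₀, u k ≤ v k := by
  intro k hk
  induction k, hk using Nat.le_induction with
  | base => exact h₀
  | succ k hk ih => linarith [hu k hk, hv k hk, mul_le_mul_of_nonneg_left ih (hρ k hk)]

theorem isBigO_rpow_neg_of_eq_one_sub_div_mul_add {u : ℕ → ℝ} {c p σ D : ℝ}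
    (hc : 1 ≤ c) (hpc : p < c)
    (hu : ∀ k : ℕ, u (k + 1) = (1 - c / ((k : ℝ) + 1 + σ)) * u k
      + D * ((k : ℝ) + 1 + σ) ^ (-(p + 1))) :
    u =O[atTop] fun k : ℕ => ((k : ℝ) + σ) ^ (-p) := by
  set δ := min (c - p) 1
  have hδ : 0 < δ := lt_min (by linarith) one_pos
  set k₀ := ⌈c - σ⌉₊
  have hk₀ : ∀ k ≥ k₀, c ≤ (k : ℝ) + σ := fun k hk => by
    linarith [Nat.le_ceil (c - σ), (Nat.cast_le (α := ℝ)).2 hk]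
  have hfk₀ : 0 < ((k₀ : ℝ) + σ) ^ (-p) :=
    Real.rpow_pos_of_pos (by linarith [hk₀ k₀ le_rfl]) _
  set C := max (|D| / δ) (|u k₀| / ((k₀ : ℝ) + σ) ^ (-p))
  have hDC : |D| ≤ C * δ := (div_le_iff₀ hδ).1 (le_max_left _ _)
  have hC : 0 ≤ C := (div_nonneg (abs_nonneg D) hδ.le).trans (le_max_left _ _)
  have hx : ∀ k ≥ k₀, 1 < (k : ℝ) + 1 + σ := fun k hk => by linarith [hk₀ k hk]
  have hρ : ∀ k ≥ k₀, 0 ≤ 1 - c / ((k : ℝ) + 1 + σ) := fun k hk => by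
    rw [sub_nonneg, div_le_one (by linarith [hx k hk])]
    linarith [hk₀ k hk]
  have bound : ∀ k ≥ k₀, |u k| ≤ C * ((k : ℝ) + σ) ^ (-p) := by
    refine le_of_le_mul_add_of_mul_add_le (g := fun k => |D| * ((k : ℝ) + 1 + σ) ^ (-(p + 1)))
      hρ (fun k hk => ?_) (fun k hk => ?_) ((div_le_iff₀ hfk₀).1 (le_max_right _ _))
    · rw [hu k]
      refine (abs_add_le _ _).trans_eq ?_
      rw [abs_mul, abs_mul, abs_of_nonneg (hρ k hk),
        abs_of_nonneg (Real.rpow_nonneg (by linarith [hx k hk]) _)]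
    · have supersolution := one_sub_div_mul_rpow_add_le hc hδ.le (min_le_right _ _)
        (min_le_left _ _) (hx k hk)
      rw [show (k : ℝ) + 1 + σ - 1 = k + σ by ring] at supersolution
      push_cast
      nlinarith [mul_le_mul_of_nonneg_left supersolution hC, mul_le_mul_of_nonneg_right hDC
        (Real.rpow_nonneg (show (0 : ℝ) ≤ k + 1 + σ by linarith [hx k hk]) (-(p + 1)))]
  refine IsBigO.of_bound C ((eventually_ge_atTop k₀).mono fun k hk => ?_)
  rw [Real.norm_eq_abs, Real.norm_of_nonneg (Real.rpow_nonneg (by linarith [hk₀ k hk]) _)]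
  exact bound k hk

theorem isBigO_natCast_add_rpow_neg {σ q : ℝ} (hσ : 0 ≤ σ) (hq : 0 ≤ q) :
    (fun k : ℕ => ((k : ℝ) + σ) ^ (-q)) =O[atTop] fun k : ℕ => (k : ℝ) ^ (-q) := by
  refine IsBigO.of_bound 1 ((eventually_ge_atTop 1).mono fun k hk => ?_)
  have hk : (0 : ℝ) < k := by exact_mod_cast hk
  rw [one_mul, Real.norm_of_nonneg (Real.rpow_nonneg (by linarith) _),
    Real.norm_of_nonneg (Real.rpow_nonneg hk.le _)]
  exact Real.rpow_le_rpow_of_nonpos hk (by linarith) (by linarith)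

theorem weighted_sum_asymptotics_general
    (s σ l a : ℝ) (hs : 0 < s) (hσ : 0 < σ)
    (ha0 : 0 ≤ a) (hsla : 1 + a < s * l / 2) :
    (fun k : ℕ => ∑ i ∈ Finset.Icc 1 k,
        (s / ((i : ℝ) + σ)) ^ (2 + a)
          * ∏ j ∈ Finset.Icc (i + 1) k, (1 - (s / ((j : ℝ) + σ)) * l / 2))
      =O[atTop] fun k : ℕ => (k : ℝ) ^ (-1 - a) := by
  rw [show -1 - a = -(1 + a) by ring]
  refine (isBigO_rpow_neg_of_eq_one_sub_div_mul_add (c := s * l / 2) (D := s ^ (2 + a))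
    (by linarith) hsla fun k => ?_).trans (isBigO_natCast_add_rpow_neg hσ.le (by linarith))
  have hx : (0 : ℝ) ≤ (k : ℝ) + 1 + σ := by positivity
  rw [sum_mul_prod_Icc_succ, show -(1 + a + 1) = -(2 + a) by ring, Real.rpow_neg hx]
  push_cast
  rw [Real.div_rpow hs.le hx]
  ring

theorem weighted_sum_asymptotics
    (s σ l a : ℝ) (hs : 0 < s) (hσ : 0 < σ) (hl : 0 < l)
    (hsl : 4 < s * l) (hσ' : 0 < 1 + σ - s * l / 2)
    (ha0 : 0 ≤ a) (ha1 : a ≤ 1) (hsla : 1 + a < s * l / 2) :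
    (fun k : ℕ => ∑ i ∈ Finset.Icc 1 k,
        (s / ((i : ℝ) + σ)) ^ (2 + a)
          * ∏ j ∈ Finset.Icc (i + 1) k, (1 - (s / ((j : ℝ) + σ)) * l / 2))
      =O[atTop] fun k : ℕ => (k : ℝ) ^ (-1 - a) :=
  weighted_sum_asymptotics_general s σ l a hs hσ ha0 hsla
end

section
/- Let (e_k) be nonnegative reals satisfying e_{k+1} ≤ (1 - α_k l/2) e_k + C α_k² with α_k = s/(k+σ), where sl > 4, 1+σ-sl/2 > 0, and C ≥ 0. Then e_k = O(1/k) as k → ∞. -/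
open Filter Asymptotics

theorem sublinear_rate_of_recursion
    (e : ℕ → ℝ) (he : ∀ k, 0 ≤ e k)
    (l s σ C : ℝ) (hl : 0 < l) (hs : 0 < s) (hσ : 0 < σ) (hC : 0 ≤ C)
    (hsl : 4 < s * l) (hσ' : 0 < 1 + σ - s * l / 2)
    (hrec : ∀ k ≥ 1, e (k + 1) ≤ (1 - (s / ((k : ℝ) + σ)) * l / 2) * e k
      + C * (s / ((k : ℝ) + σ)) ^ 2) :
    (fun k : ℕ => e k) =O[atTop] fun k : ℕ => 1 / (k : ℝ) := by
  set β := s * l / 2 with hβ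
  have hβ2 : 2 < β := by rw [hβ]; linarith
  clear_value β
  set M := 2 * (C * s ^ 2) + e 1 * (1 + σ) with hM
  have hCs : 0 ≤ C * s ^ 2 := by positivity
  have he1 : 0 ≤ e 1 * (1 + σ) := by nlinarith [he 1]
  have hM1 : 2 * (C * s ^ 2) ≤ M := by nlinarith
  have hM2 : e 1 * (1 + σ) ≤ M := by nlinarith
  have hM0 : 0 ≤ M := by nlinarith
  clear_value M
  have key : ∀ k, 1 ≤ k → e k ≤ M / ((k : ℝ) + σ) := by
    intro k hk
    induction k, hk using Nat.le_induction with
    | base =>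
      rw [le_div_iff₀ (by push_cast; linarith)]
      push_cast
      nlinarith
    | succ k hk ih =>
      have hxk : (1:ℝ) ≤ (k:ℝ) := by exact_mod_cast hk
      set x := (k:ℝ) + σ with hxdef
      clear_value x
      have hx1 : (1:ℝ) ≤ x := by rw [hxdef]; linarith
      have hx0 : (0:ℝ) < x := by linarith
      have hrk := hrec k hk
      have hcast : ((k + 1 : ℕ) : ℝ) + σ = x + 1 := by push_cast; rw [hxdef]; ring
      rw [hcast]
      have hco : (1 - s / x * l / 2) = 1 - β / x := by rw [hβ]; ring
      rw [← hxdef, hco] at hrk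
      by_cases hc : 0 ≤ 1 - β / x
      · have hxβ : β ≤ x := by
          have hb1 : β / x ≤ 1 := by linarith
          have := (div_le_one hx0).mp hb1
          linarith
        have h1 : (1 - β / x) * e k ≤ (1 - β / x) * (M / x) :=
          mul_le_mul_of_nonneg_left ih hc
        have h2 : e (k + 1) ≤ (1 - β / x) * (M / x) + C * (s / x) ^ 2 := by linarith
        refine h2.trans ?_
        have hform : (1 - β / x) * (M / x) + C * (s / x) ^ 2
            = ((x - β) * M + C * s ^ 2) / x ^ 2 := by
          field_simp
        rw [hform, div_le_div_iff₀ (by positivity) (by linarith)]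
        have t1 : 2 * (C * s ^ 2) * (x + 1) ≤ M * (x + 1) :=
          mul_le_mul_of_nonneg_right hM1 (by linarith)
        have t2 : 0 ≤ M * ((β - 2) * x) :=
          mul_nonneg hM0 (mul_nonneg (by linarith) hx0.le)
        have t3 : 0 ≤ M * (β - 1) := mul_nonneg hM0 (by linarith)
        have t4 : 0 ≤ C * s ^ 2 * x := mul_nonneg hCs hx0.le
        linarith [t1, t2, t3, t4, hCs]
      · have h0 : (1 - β / x) * e k ≤ 0 :=
          mul_nonpos_of_nonpos_of_nonneg (by linarith) (he k)
        have h2 : e (k + 1) ≤ C * (s / x) ^ 2 := by linarith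
        refine h2.trans ?_
        have hform : C * (s / x) ^ 2 = C * s ^ 2 / x ^ 2 := by field_simp
        rw [hform, div_le_div_iff₀ (by positivity) (by linarith)]
        have hA : C * s ^ 2 * (x + 1) ≤ 2 * (C * s ^ 2) * x ^ 2 := by
          have := mul_nonneg hCs (mul_nonneg (by linarith : (0:ℝ) ≤ 2 * x + 1)
            (by linarith : (0:ℝ) ≤ x - 1))
          nlinarith [this]
        have hB : 2 * (C * s ^ 2) * x ^ 2 ≤ M * x ^ 2 :=
          mul_le_mul_of_nonneg_right hM1 (sq_nonneg x)
        linarith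
  rw [isBigO_iff]
  refine ⟨M, eventually_atTop.mpr ⟨1, fun k hk => ?_⟩⟩
  have hk1 : (1:ℝ) ≤ (k:ℝ) := by exact_mod_cast hk
  have hkey := key k hk
  rw [Real.norm_eq_abs, Real.norm_eq_abs, abs_of_nonneg (he k),
    abs_of_nonneg (by positivity : (0:ℝ) ≤ 1 / (k:ℝ))]
  calc e k ≤ M / ((k:ℝ) + σ) := hkey
    _ ≤ M / k := div_le_div_of_nonneg_left hM0 (by linarith) (by linarith)
    _ = M * (1 / k) := by ring
end

section
/- Let (e_k) be nonnegative reals satisfying e_{k+1} ≤ (1 - α_k l/2) e_k + C α_k^{2+κ} with α_k = s/(k+σ), where 0 < κ ≤ 1, sl > 2 + 2κ + 2 (i.e., sl/2 > 1+κ and sl > 4), 1+σ-sl/2 > 0, and C ≥ 0. Then e_k = O(1/k^{1+κ}) as k → ∞. -/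
open Filter Asymptotics

/-!
Since `s l / 2 > 1 + κ`, the recursion contracts faster than the target rate decays: with
`a = s l / 2`, `p = 1 + κ` and `t = k + σ`, a bound `e_k ≤ M / t^p` propagates to
`e_{k+1} ≤ M (1 - p/t) / t^p ≤ M / (t + 1)^p` as soon as `M (a - p) ≥ C s^(2+κ)` and `t ≥ a`.
The last inequality is `1 - p/t ≤ (t/(t+1))^p`, i.e. `exp x ≥ 1 + x` applied to
`x = p log (t/(t+1)) ≥ -p/t`.
-/

namespace Real

theorem one_sub_div_le_div_add_one_rpow {p t : ℝ} (hp : 0 ≤ p) (ht : 0 < t) :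
    1 - p / t ≤ (t / (t + 1)) ^ p := by
  have hq : 0 < t / (t + 1) := by positivity
  have hlog : -(1 / t) ≤ log (t / (t + 1)) := by
    have := one_sub_inv_le_log_of_pos hq
    rwa [inv_div, add_div, div_self ht.ne', sub_add_cancel_left] at this
  calc 1 - p / t = p * -(1 / t) + 1 := by ring
    _ ≤ p * log (t / (t + 1)) + 1 := by gcongr
    _ ≤ exp (log (t / (t + 1)) * p) := by rw [mul_comm]; exact add_one_le_exp _
    _ = (t / (t + 1)) ^ p := (rpow_def_of_pos hq p).symm

end Real

section RecursionRate

variable {a p t x y D M : ℝ}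

theorem le_div_add_one_rpow_of_le_one_sub_div_mul_add (hp : 0 ≤ p) (ht : 0 < t) (hat : a ≤ t)
    (hM : 0 ≤ M) (hD : D ≤ M * (a - p)) (hx : x ≤ M / t ^ p)
    (hy : y ≤ (1 - a / t) * x + D / t ^ (p + 1)) :
    y ≤ M / (t + 1) ^ p := by
  have hcontr : 0 ≤ 1 - a / t := sub_nonneg.2 ((div_le_one ht).2 hat)
  calc y ≤ (1 - a / t) * (M / t ^ p) + M * (a - p) / t ^ (p + 1) := by
        refine hy.trans ?_
        gcongr
    _ = M * (1 - p / t) / t ^ p := by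
        rw [Real.rpow_add_one ht.ne']
        field_simp
        ring
    _ ≤ M * (t / (t + 1)) ^ p / t ^ p := by
        gcongr
        exact Real.one_sub_div_le_div_add_one_rpow hp ht
    _ = M / (t + 1) ^ p := by
        rw [Real.div_rpow ht.le (by positivity)]
        field_simp

variable {e : ℕ → ℝ} {σ : ℝ}

theorem isBigO_one_div_rpow_of_le_one_sub_div_mul_add (he : ∀ k, 0 ≤ e k) (hp : 0 ≤ p)
    (hpa : p < a) (hσ : 0 < σ)
    (hrec : ∀ᶠ k : ℕ in atTop,
      e (k + 1) ≤ (1 - a / (k + σ)) * e k + D / ((k : ℝ) + σ) ^ (p + 1)) :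
    e =O[atTop] fun k : ℕ => 1 / (k : ℝ) ^ p := by
  obtain ⟨k₀, hk₀⟩ := eventually_atTop.1
    (hrec.and (tendsto_natCast_atTop_atTop.eventually_ge_atTop (a - σ)))
  set M := max (D / (a - p)) (e k₀ * ((k₀ : ℝ) + σ) ^ p)
  have hM : 0 ≤ M := le_max_of_le_right (mul_nonneg (he k₀) (by positivity))
  have hD : D ≤ M * (a - p) := (div_le_iff₀ (sub_pos.2 hpa)).1 (le_max_left _ _)
  have hbound : ∀ k ≥ k₀, e k ≤ M / ((k : ℝ) + σ) ^ p := by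
    intro k hk
    induction k, hk using Nat.le_induction with
    | base => exact (le_div_iff₀ (by positivity)).2 (le_max_right _ _)
    | succ n hn ih =>
      obtain ⟨hrec_n, han⟩ := hk₀ n hn
      push_cast
      rw [add_right_comm]
      exact le_div_add_one_rpow_of_le_one_sub_div_mul_add hp (by positivity) (by linarith)
        hM hD ih hrec_n
  refine IsBigO.of_bound M ?_
  filter_upwards [eventually_ge_atTop k₀, eventually_gt_atTop 0] with k hk hk0
  have hkpos : (0 : ℝ) < k := Nat.cast_pos.2 hk0
  rw [Real.norm_of_nonneg (he k), Real.norm_of_nonneg (by positivity), mul_one_div]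
  calc e k ≤ M / ((k : ℝ) + σ) ^ p := hbound k hk
    _ ≤ M / (k : ℝ) ^ p := by gcongr; linarith

end RecursionRate

theorem improved_rate_of_recursion_general
    (e : ℕ → ℝ) (he : ∀ k, 0 ≤ e k)
    (l s σ C κ : ℝ) (hs : 0 < s) (hσ : 0 < σ)
    (hκ0 : 0 < κ)
    (hslκ : 1 + κ < s * l / 2)
    (hrec : ∀ k ≥ 1, e (k + 1) ≤ (1 - (s / ((k : ℝ) + σ)) * l / 2) * e k
      + C * (s / ((k : ℝ) + σ)) ^ (2 + κ)) :
    (fun k : ℕ => e k) =O[atTop] fun k : ℕ => 1 / (k : ℝ) ^ (1 + κ) := by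
  refine isBigO_one_div_rpow_of_le_one_sub_div_mul_add (a := s * l / 2) (σ := σ)
    (D := C * s ^ (2 + κ)) he (by linarith) hslκ hσ ?_
  filter_upwards [eventually_ge_atTop 1] with k hk
  have ht : (0 : ℝ) < k + σ := by positivity
  convert hrec k hk using 2
  · ring
  · rw [Real.div_rpow hs.le ht.le, mul_div_assoc]
    ring_nf

theorem improved_rate_of_recursion
    (e : ℕ → ℝ) (he : ∀ k, 0 ≤ e k)
    (l s σ C κ : ℝ) (hl : 0 < l) (hs : 0 < s) (hσ : 0 < σ) (hC : 0 ≤ C)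
    (hκ0 : 0 < κ) (hκ1 : κ ≤ 1)
    (hsl : 4 < s * l) (hslκ : 1 + κ < s * l / 2) (hσ' : 0 < 1 + σ - s * l / 2)
    (hrec : ∀ k ≥ 1, e (k + 1) ≤ (1 - (s / ((k : ℝ) + σ)) * l / 2) * e k
      + C * (s / ((k : ℝ) + σ)) ^ (2 + κ)) :
    (fun k : ℕ => e k) =O[atTop] fun k : ℕ => 1 / (k : ℝ) ^ (1 + κ) :=
  improved_rate_of_recursion_general e he l s σ C κ hs hσ hκ0 hslκ hrec
end
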